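/- Let h_1,…,h_N be Hermitian d×d complex matrices with H = ∑_l h_l and λ = ∑_l ‖h_l‖ > 0. Let t > 0, ε ∈ (0,1], m ≥ 1, and let k_1,…,k_m be pairwise distinct positive integers with reals a_1,…,a_m solving the Vandermonde system ∑_j a_j k_j^{-2(i-1)} = δ_{i,1} for i ∈ {1,…,m}. If r is a positive integer with r ≥ tλ · max{ (8tλ·(∑_j|a_j|)/(ε·(2m+1)!))^{1/(2m)}, 1/log 2 }, then ‖( ∑_{j=1}^m a_j · U_2(t/(r k_j))^{k_j} )^r − exp(−itH)‖ ≤ ε. -/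

import Mathlib

/-!
Write `u(x) = ∏ₗ exp (x cₗ) ∏ₗ^{rev} exp (x cₗ)`, with `cₗ = -i hₗ / 2`, for the symmetric
Trotter product as a formal power series in `x` with matrix coefficients. Since
`u(-x) u(x) = 1`, its formal logarithm `g` is odd, so the `xⁿ`-coefficient of
`u(x/k)ᵏ = exp (k g(x/k))` is a polynomial in `k⁻²` whose constant term is the `xⁿ`-coefficient
of `exp (-i x H)`. The Vandermonde conditions on the `aⱼ` annihilate all other terms for
`n ≤ 2m`, so the multiproduct `M(δ) = ∑ⱼ aⱼ u(δ/kⱼ)^kⱼ` agrees with `exp (-i δ H)` to order `2m`.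
The coefficient bounds `‖[xⁿ] u(x)ᵏ‖ ≤ (kλ)ⁿ/n!` turn this into
`‖M(δ) - exp (-i δ H)‖ ≤ η := (‖a‖₁ + 1) (λδ)^{2m+1}/(2m+1)! · e^{λδ}`.
As `exp (-i δ H)` is unitary, `r` steps accumulate an error of at most `2 r η`, and the
choice of `r` makes this at most `ε`.
-/

open scoped Matrix.Norms.L2Operator

/-- The symmetric second-order Trotter product formula
`U₂ δ = (∏_{l=1}^{N} exp (-i h l δ / 2)) * (∏_{l=N}^{1} exp (-i h l δ / 2))`,
the second product taken in reversed order. -/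
noncomputable def U2 {d N : ℕ} (h : Fin N → Matrix (Fin d) (Fin d) ℂ) (δ : ℝ) :
    Matrix (Fin d) (Fin d) ℂ :=
  (List.ofFn fun l => NormedSpace.exp (((-(δ / 2) : ℝ) * Complex.I : ℂ) • h l)).prod *
    (List.ofFn fun l =>
      NormedSpace.exp (((-(δ / 2) : ℝ) * Complex.I : ℂ) • h l)).reverse.prod

open Finset Polynomial
open scoped Nat

theorem List.prod_ofFn_mul_prod_reverse_ofFn {M : Type*} [Monoid M] {n : ℕ} {f g : Fin n → M}
    (h : ∀ i, f i * g i = 1) : (List.ofFn f).prod * (List.ofFn g).reverse.prod = 1 := by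
  induction n with
  | zero => simp
  | succ n ih =>
    rw [List.ofFn_succ, List.ofFn_succ, List.prod_cons, List.reverse_cons, List.prod_append,
      List.prod_singleton, mul_assoc, ← mul_assoc (List.ofFn _).prod,
      ih fun i => h i.succ, one_mul, h 0]

theorem List.prod_reverse_ofFn_mul_prod_ofFn {M : Type*} [Monoid M] {n : ℕ} {f g : Fin n → M}
    (h : ∀ i, g i * f i = 1) : (List.ofFn g).reverse.prod * (List.ofFn f).prod = 1 := by
  induction n with
  | zero => simp
  | succ n ih =>
    rw [List.ofFn_succ, List.ofFn_succ, List.prod_cons, List.reverse_cons, List.prod_append,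
      List.prod_singleton, mul_assoc, ← mul_assoc (g 0), h 0, one_mul, ih fun i => h i.succ]

def IsExtrapolationWeights {𝕂 : Type*} [Field 𝕂] {m : ℕ} (k : Fin m → ℕ) (a : Fin m → 𝕂) :
    Prop :=
  ∀ q < m, ∑ j, a j * ((k j : 𝕂) ^ (2 * q))⁻¹ = if q = 0 then 1 else 0

namespace IsExtrapolationWeights

variable {𝕂 : Type*} [Field 𝕂] {m : ℕ} {k : Fin m → ℕ} {a : Fin m → 𝕂}

theorem map {𝕃 : Type*} [Field 𝕃] (ha : IsExtrapolationWeights k a) (e : 𝕂 →+* 𝕃) :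
    IsExtrapolationWeights k (e ∘ a) := fun q hq => by
  simpa [apply_ite e] using congrArg e (ha q hq)

theorem sum_eq_one (ha : IsExtrapolationWeights k a) (hm : 0 < m) : ∑ j, a j = 1 := by
  simpa using ha 0 hm

theorem one_le_sum_abs [LinearOrder 𝕂] [IsStrictOrderedRing 𝕂] (ha : IsExtrapolationWeights k a)
    (hm : 0 < m) : 1 ≤ ∑ j, |a j| := by
  simpa [ha.sum_eq_one hm] using Finset.abs_sum_le_sum_abs a Finset.univ

end IsExtrapolationWeights

theorem sum_antidiagonal_pow_div_factorial_mul {K : Type*} [Field K] [CharZero K] (x y : K)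
    (n : ℕ) :
    ∑ ij ∈ antidiagonal n, x ^ ij.1 / ij.1 ! * (y ^ ij.2 / ij.2 !) = (x + y) ^ n / n ! := by
  have := congrArg (PowerSeries.coeff n) (PowerSeries.exp_mul_exp_eq_exp_add x y)
  simpa [PowerSeries.coeff_mul, PowerSeries.coeff_exp, div_eq_mul_inv] using this

theorem tsum_pow_add_div_factorial_le {x : ℝ} (hx : 0 ≤ x) (K : ℕ) :
    ∑' i, x ^ (i + K) / (i + K)! ≤ x ^ K / K ! * Real.exp x := by
  have hle : ∀ i, x ^ (i + K) / (i + K)! ≤ x ^ K / K ! * (x ^ i / i !) := fun i => by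
    rw [div_mul_div_comm, pow_add, mul_comm (x ^ i)]
    gcongr
    exact_mod_cast Nat.le_of_dvd (Nat.factorial_pos _)
      (by simpa [add_comm] using Nat.factorial_mul_factorial_dvd_factorial_add K i)
  calc ∑' i, x ^ (i + K) / (i + K)!
      ≤ ∑' i, x ^ K / K ! * (x ^ i / i !) :=
        Summable.tsum_le_tsum hle ((summable_nat_add_iff K).mpr (Real.summable_pow_div_factorial x))
          ((Real.summable_pow_div_factorial x).mul_left _)
    _ = x ^ K / K ! * Real.exp x := by
        rw [tsum_mul_left, Real.exp_eq_exp_ℝ, NormedSpace.exp_eq_tsum_div]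

namespace PowerSeries

section Semiring

variable {A : Type*} [Semiring A]

theorem coeff_pow_eq_zero_of_lt {f : A⟦X⟧} (hf : constantCoeff f = 0) {n ℓ : ℕ} (h : n < ℓ) :
    coeff n (f ^ ℓ) = 0 :=
  coeff_of_lt_order n ((Nat.cast_lt.mpr h).trans_le (le_order_pow_of_constantCoeff_eq_zero ℓ hf))

theorem constantCoeff_monomial_succ (n : ℕ) (a : A) : constantCoeff (monomial (n + 1) a) = 0 := by
  rw [← coeff_zero_eq_constantCoeff_apply, coeff_monomial, if_neg n.succ_ne_zero.symm]

theorem le_order_monomial (n : ℕ) (a : A) : (n : ℕ∞) ≤ (monomial n a).order :=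
  le_order _ _ fun j hj => by rw [coeff_monomial, if_neg (by exact_mod_cast hj.ne)]

theorem monomial_one_pow (a : A) (n : ℕ) : monomial 1 a ^ n = monomial n (a ^ n) := by
  induction n with
  | zero => simp
  | succ n ih => rw [pow_succ, ih, monomial_mul_monomial, pow_succ]

theorem constantCoeff_list_prod_eq_one {L : List A⟦X⟧} (h : ∀ f ∈ L, constantCoeff f = 1) :
    constantCoeff L.prod = 1 := by
  rw [map_list_prod]
  exact List.prod_eq_one fun x hx => by
    obtain ⟨f, hf, rfl⟩ := List.mem_map.mp hx
    exact h f hf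

theorem coeff_one_mul_of_constantCoeff {f g : A⟦X⟧} (hf : constantCoeff f = 1)
    (hg : constantCoeff g = 1) : coeff 1 (f * g) = coeff 1 f + coeff 1 g := by
  simp [coeff_mul, Finset.Nat.antidiagonal_succ, coeff_zero_eq_constantCoeff, hf, hg, add_comm]

theorem coeff_one_list_prod {L : List A⟦X⟧} (h : ∀ f ∈ L, constantCoeff f = 1) :
    coeff 1 L.prod = (L.map (coeff 1)).sum := by
  induction L with
  | nil => simp [coeff_one]
  | cons f L ih =>
    have hL : ∀ g ∈ L, constantCoeff g = 1 := fun g hg => h g (List.mem_cons_of_mem f hg)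
    rw [List.prod_cons, List.map_cons, List.sum_cons, coeff_one_mul_of_constantCoeff
      (h f List.mem_cons_self) (constantCoeff_list_prod_eq_one hL), ih hL]

end Semiring

section Ring

variable {A : Type*} [Ring A]

theorem le_order_add_pow_sub_pow {f e : A⟦X⟧} (hf : constantCoeff f = 0)
    (he : constantCoeff e = 0) {n : ℕ} (hn : (n : ℕ∞) ≤ e.order) (ℓ : ℕ) :
    ((n + ℓ : ℕ) : ℕ∞) ≤ ((f + e) ^ (ℓ + 1) - f ^ (ℓ + 1)).order := by
  induction ℓ with
  | zero => simpa using hn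
  | succ ℓ ih =>
    have hfe : constantCoeff (f + e) = 0 := by simp [hf, he]
    have hsplit : (f + e) ^ (ℓ + 1 + 1) - f ^ (ℓ + 1 + 1) =
        (f + e) ^ (ℓ + 1) * e + ((f + e) ^ (ℓ + 1) - f ^ (ℓ + 1)) * f := by
      rw [pow_succ _ (ℓ + 1), pow_succ f (ℓ + 1)]; noncomm_ring
    rw [hsplit]
    refine le_trans (le_min ?_ ?_) (min_order_le_order_add _ _)
    · refine le_trans ?_ (le_order_mul _ _)
      have := le_order_pow_of_constantCoeff_eq_zero (ℓ + 1) hfe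
      calc ((n + (ℓ + 1) : ℕ) : ℕ∞) = ((ℓ + 1 : ℕ) : ℕ∞) + n := by push_cast; ring
        _ ≤ _ := add_le_add this hn
    · refine le_trans ?_ (le_order_mul _ _)
      have := (one_le_order_iff_constCoeff_eq_zero).mpr hf
      calc ((n + (ℓ + 1) : ℕ) : ℕ∞) = ((n + ℓ : ℕ) : ℕ∞) + 1 := by push_cast; ring
        _ ≤ _ := add_le_add ih this

theorem coeff_pow_self {g : A⟦X⟧} (hg : constantCoeff g = 0) (n : ℕ) :
    coeff n (g ^ n) = coeff 1 g ^ n := by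
  rcases n with _ | n
  · simp
  set e := g - monomial 1 (coeff 1 g)
  have he : constantCoeff e = 0 := by
    rw [map_sub, hg, constantCoeff_monomial_succ 0, sub_zero]
  have hord : ((2 : ℕ) : ℕ∞) ≤ e.order := le_order _ _ fun i hi => by
    have : i = 0 ∨ i = 1 := by have := Nat.cast_lt.mp hi; omega
    rcases this with rfl | rfl
    · rw [coeff_zero_eq_constantCoeff, he]
    · simp [e]
  have key := coeff_of_lt_order (n + 1)
    ((Nat.cast_lt.mpr (by omega : n + 1 < 2 + n)).trans_le
      (le_order_add_pow_sub_pow (constantCoeff_monomial_succ 0 (coeff 1 g)) he hord n))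
  rw [zero_add, add_sub_cancel, map_sub, sub_eq_zero, monomial_one_pow, coeff_monomial_same] at key
  exact key

end Ring

section Algebra

variable {𝕂 A : Type*} [Field 𝕂] [Ring A] [Algebra 𝕂 A]

variable (𝕂) in
noncomputable def expMulX (a : A) : A⟦X⟧ :=
  mk fun n => (n ! : 𝕂)⁻¹ • a ^ n

@[simp] theorem coeff_expMulX (a : A) (n : ℕ) :
    coeff n (expMulX 𝕂 a) = (n ! : 𝕂)⁻¹ • a ^ n :=
  coeff_mk _ _

@[simp] theorem constantCoeff_expMulX (a : A) : constantCoeff (expMulX 𝕂 a) = 1 := by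
  simp [← coeff_zero_eq_constantCoeff_apply]

/-- The formal power series `p ∘ f`, for a scalar series `p` and `f` without constant term:
its `n`-th coefficient is read off the polynomial truncation of `p` below degree `n + 1`. -/
noncomputable def scalarSubst (f : A⟦X⟧) (p : 𝕂⟦X⟧) : A⟦X⟧ :=
  mk fun n => coeff n (Polynomial.aeval f (trunc (n + 1) p))

theorem coeff_aeval_eq_of_coeff_eq {f : A⟦X⟧} (hf : constantCoeff f = 0) {n : ℕ}
    {P Q : 𝕂[X]} (h : ∀ i ≤ n, P.coeff i = Q.coeff i) :
    coeff n (Polynomial.aeval f P) = coeff n (Polynomial.aeval f Q) := by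
  rw [← sub_eq_zero, ← LinearMap.map_sub, ← map_sub,
    Polynomial.aeval_eq_sum_range, map_sum]
  refine sum_eq_zero fun i _ => ?_
  rw [coeff_smul]
  rcases le_or_gt i n with hi | hi
  · rw [Polynomial.coeff_sub, h i hi, sub_self, zero_smul]
  · rw [coeff_pow_eq_zero_of_lt hf hi, smul_zero]

theorem coeff_scalarSubst {f : A⟦X⟧} (hf : constantCoeff f = 0) {p : 𝕂⟦X⟧} {n : ℕ}
    {P : 𝕂[X]} (h : ∀ i ≤ n, P.coeff i = coeff i p) :
    coeff n (scalarSubst f p) = coeff n (Polynomial.aeval f P) := by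
  rw [scalarSubst, coeff_mk]
  refine coeff_aeval_eq_of_coeff_eq hf fun i hi => ?_
  rw [h i hi, coeff_trunc, if_pos (by omega)]

theorem coeff_scalarSubst_eq_sum (f : A⟦X⟧) (p : 𝕂⟦X⟧) (n : ℕ) :
    coeff n (scalarSubst f p) = ∑ ℓ ∈ range (n + 1), coeff ℓ p • coeff n (f ^ ℓ) := by
  rw [scalarSubst, coeff_mk, Polynomial.aeval_eq_sum_range' (natDegree_trunc_lt p n), map_sum]
  refine sum_congr rfl fun ℓ hℓ => ?_
  rw [coeff_smul, coeff_trunc, if_pos (mem_range.mp hℓ)]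

theorem scalarSubst_mul {f : A⟦X⟧} (hf : constantCoeff f = 0) (p q : 𝕂⟦X⟧) :
    scalarSubst f (p * q) = scalarSubst f p * scalarSubst f q := by
  ext n
  have htrunc : ∀ (r : 𝕂⟦X⟧) {i : ℕ}, i ≤ n →
      coeff i (scalarSubst f r) = coeff i (Polynomial.aeval f (trunc (n + 1) r)) := fun r i hi =>
    coeff_scalarSubst hf fun j hj => by rw [coeff_trunc, if_pos (by omega)]
  rw [coeff_scalarSubst hf (P := trunc (n + 1) p * trunc (n + 1) q), map_mul, coeff_mul,
    coeff_mul]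
  · refine sum_congr rfl fun ij hij => ?_
    rw [HasAntidiagonal.mem_antidiagonal] at hij
    rw [htrunc p (by omega), htrunc q (by omega)]
  · intro i hi
    rw [← Polynomial.coeff_coe, Polynomial.coe_mul,
      ← coeff_mul_eq_coeff_trunc_mul_trunc _ _ (by omega)]

/-- The substitution `f(X) ↦ f(c X)`: `rescale c` for noncommutative coefficients. -/
noncomputable def rescaleScalar (c : 𝕂) : A⟦X⟧ →ₐ[𝕂] A⟦X⟧ where
  toFun f := mk fun n => c ^ n • coeff n f
  map_one' := by
    ext n
    rcases n with _ | n <;> simp [coeff_one]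
  map_mul' f g := by
    ext n
    simp only [coeff_mk, coeff_mul, smul_sum]
    refine sum_congr rfl fun ij hij => ?_
    rw [HasAntidiagonal.mem_antidiagonal] at hij
    rw [smul_mul_smul_comm, ← pow_add, hij]
  map_zero' := by ext; simp
  map_add' f g := by ext; simp
  commutes' r := by
    ext n
    rcases n with _ | n <;> simp [algebraMap_apply, coeff_C]

@[simp] theorem coeff_rescaleScalar (c : 𝕂) (f : A⟦X⟧) (n : ℕ) :
    coeff n (rescaleScalar c f) = c ^ n • coeff n f := by
  simp [rescaleScalar]

theorem rescaleScalar_expMulX (c : 𝕂) (a : A) :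
    rescaleScalar c (expMulX 𝕂 a) = expMulX 𝕂 (c • a) := by
  ext n
  rw [coeff_rescaleScalar, coeff_expMulX, coeff_expMulX, _root_.smul_pow, smul_comm]

theorem rescaleScalar_scalarSubst (c : 𝕂) (f : A⟦X⟧) (p : 𝕂⟦X⟧) :
    rescaleScalar c (scalarSubst f p) = scalarSubst (rescaleScalar c f) p := by
  ext n
  rw [coeff_rescaleScalar, scalarSubst, scalarSubst, coeff_mk, coeff_mk,
    Polynomial.aeval_algHom_apply, coeff_rescaleScalar]

section FormalExp

variable [CharZero 𝕂]

variable (𝕂) in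
noncomputable def formalExp (f : A⟦X⟧) : A⟦X⟧ :=
  scalarSubst f (exp 𝕂)

theorem coeff_formalExp (f : A⟦X⟧) (n : ℕ) :
    coeff n (formalExp 𝕂 f) = ∑ ℓ ∈ range (n + 1), (ℓ ! : 𝕂)⁻¹ • coeff n (f ^ ℓ) := by
  simp [formalExp, coeff_scalarSubst_eq_sum, coeff_exp]

theorem coeff_one_formalExp (f : A⟦X⟧) :
    coeff 1 (formalExp 𝕂 f) = coeff 1 f := by
  simp [coeff_formalExp, sum_range_succ, coeff_one]

theorem formalExp_zero : formalExp 𝕂 (0 : A⟦X⟧) = 1 := by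
  ext n
  rcases n with _ | n <;> simp [coeff_formalExp, sum_range_succ', coeff_one]

theorem formalExp_smul (a : 𝕂) (g : A⟦X⟧) :
    formalExp 𝕂 (a • g) = scalarSubst g (rescale a (exp 𝕂)) := by
  ext n
  simp only [coeff_formalExp, coeff_scalarSubst_eq_sum, coeff_rescale, coeff_exp,
    _root_.smul_pow, coeff_smul, smul_smul]
  refine sum_congr rfl fun ℓ _ => ?_
  simp [mul_comm]

theorem formalExp_smul_mul_formalExp_smul {g : A⟦X⟧} (hg : constantCoeff g = 0) (a b : 𝕂) :
    formalExp 𝕂 (a • g) * formalExp 𝕂 (b • g) = formalExp 𝕂 ((a + b) • g) := by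
  rw [formalExp_smul, formalExp_smul, formalExp_smul, ← scalarSubst_mul hg,
    exp_mul_exp_eq_exp_add]

theorem formalExp_neg_mul_formalExp {g : A⟦X⟧} (hg : constantCoeff g = 0) :
    formalExp 𝕂 (-g) * formalExp 𝕂 g = 1 := by
  simpa [formalExp_zero] using formalExp_smul_mul_formalExp_smul (𝕂 := 𝕂) hg (-1) 1

theorem formalExp_mul_formalExp_neg {g : A⟦X⟧} (hg : constantCoeff g = 0) :
    formalExp 𝕂 g * formalExp 𝕂 (-g) = 1 := by
  simpa [formalExp_zero] using formalExp_smul_mul_formalExp_smul (𝕂 := 𝕂) hg 1 (-1)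

theorem formalExp_pow {g : A⟦X⟧} (hg : constantCoeff g = 0) (k : ℕ) :
    formalExp 𝕂 g ^ k = formalExp 𝕂 ((k : 𝕂) • g) := by
  induction k with
  | zero => simp [formalExp_zero]
  | succ k ih =>
    have := formalExp_smul_mul_formalExp_smul hg (k : 𝕂) 1
    rwa [one_smul, ← Nat.cast_succ, ← ih, ← pow_succ] at this

theorem coeff_formalExp_add {f e : A⟦X⟧} (hf : constantCoeff f = 0) (he : constantCoeff e = 0)
    {n : ℕ} (hn : (n : ℕ∞) ≤ e.order) :
    coeff n (formalExp 𝕂 (f + e)) = coeff n (formalExp 𝕂 f) + coeff n e := by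
  rw [coeff_formalExp, coeff_formalExp, ← sub_eq_iff_eq_add', ← sum_sub_distrib,
    sum_eq_single 1]
  · simp
  · intro ℓ _ hℓ
    rw [← smul_sub, ← map_sub]
    rcases ℓ with _ | _ | ℓ
    · simp
    · exact absurd rfl hℓ
    · rw [coeff_of_lt_order, smul_zero]
      refine lt_of_lt_of_le ?_ (le_order_add_pow_sub_pow hf he hn (ℓ + 1))
      exact_mod_cast (by omega : n < n + (ℓ + 1))
  · intro h1
    have hn0 : n = 0 := by simpa using h1
    simp [hn0, he]

theorem formalExp_injective {f g : A⟦X⟧} (hf : constantCoeff f = 0) (hg : constantCoeff g = 0)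
    (h : formalExp 𝕂 f = formalExp 𝕂 g) : f = g := by
  by_contra hne
  have he : g - f ≠ 0 := sub_ne_zero.mpr (Ne.symm hne)
  have key := coeff_formalExp_add (𝕂 := 𝕂) hf (e := g - f) (by simp [hf, hg])
    (n := (g - f).order.toNat) (by rw [ENat.natCast_toNat (order_eq_top.not.mpr he)])
  rw [add_sub_cancel, h, left_eq_add] at key
  exact coeff_order he key

variable (𝕂) in
/-- Degree-by-degree construction of the logarithm: the `n + 1`-st step corrects the
coefficient of `X ^ (n + 1)` so that `formalExp` of it matches `u` up to that degree. -/
noncomputable def logTrunc (u : A⟦X⟧) : ℕ → A⟦X⟧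
  | 0 => 0
  | n + 1 => logTrunc u n +
      monomial (n + 1) (coeff (n + 1) u - coeff (n + 1) (formalExp 𝕂 (logTrunc u n)))

variable (𝕂) in
noncomputable def formalLog (u : A⟦X⟧) : A⟦X⟧ :=
  mk fun n => coeff n (logTrunc 𝕂 u n)

theorem constantCoeff_logTrunc (u : A⟦X⟧) (n : ℕ) : constantCoeff (logTrunc 𝕂 u n) = 0 := by
  induction n with
  | zero => simp [logTrunc]
  | succ n ih => rw [logTrunc, map_add, ih, constantCoeff_monomial_succ, add_zero]

theorem coeff_logTrunc_of_le (u : A⟦X⟧) {i n n' : ℕ} (hi : i ≤ n) (hn : n ≤ n') :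
    coeff i (logTrunc 𝕂 u n') = coeff i (logTrunc 𝕂 u n) := by
  induction n', hn using Nat.le_induction with
  | base => rfl
  | succ n' _ ih => rw [logTrunc, map_add, coeff_monomial, if_neg (by omega), add_zero, ih]

theorem coeff_formalLog (u : A⟦X⟧) {i n : ℕ} (hi : i ≤ n) :
    coeff i (formalLog 𝕂 u) = coeff i (logTrunc 𝕂 u n) := by
  rw [formalLog, coeff_mk, coeff_logTrunc_of_le u le_rfl hi]

theorem constantCoeff_formalLog (u : A⟦X⟧) : constantCoeff (formalLog 𝕂 u) = 0 := by
  rw [← coeff_zero_eq_constantCoeff_apply, coeff_formalLog u le_rfl, coeff_zero_eq_constantCoeff,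
    constantCoeff_logTrunc]

theorem coeff_formalExp_logTrunc {u : A⟦X⟧} (hu : constantCoeff u = 1) {i n : ℕ} (hi : i ≤ n) :
    coeff i (formalExp 𝕂 (logTrunc 𝕂 u n)) = coeff i u := by
  induction n generalizing i with
  | zero =>
    obtain rfl : i = 0 := by omega
    simp [logTrunc, formalExp_zero, hu]
  | succ n ih =>
    rw [logTrunc, coeff_formalExp_add (constantCoeff_logTrunc u n)
      (constantCoeff_monomial_succ _ _)
      (le_trans (by exact_mod_cast hi) (le_order_monomial _ _)), coeff_monomial]
    split_ifs with h
    · subst h; abel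
    · rw [add_zero, ih (by omega)]

theorem formalExp_formalLog {u : A⟦X⟧} (hu : constantCoeff u = 1) :
    formalExp 𝕂 (formalLog 𝕂 u) = u := by
  ext n
  have htail : ((n + 1 : ℕ) : ℕ∞) ≤ (formalLog 𝕂 u - logTrunc 𝕂 u n).order :=
    le_order _ _ fun i hi => by
      rw [map_sub, coeff_formalLog u (Nat.lt_succ_iff.mp (by exact_mod_cast hi)), sub_self]
  have key := coeff_formalExp_add (𝕂 := 𝕂) (constantCoeff_logTrunc (𝕂 := 𝕂) u n)
    (by rw [map_sub, constantCoeff_formalLog, constantCoeff_logTrunc, sub_zero])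
    ((Nat.cast_le.mpr n.le_succ).trans htail)
  rw [add_sub_cancel, coeff_formalExp_logTrunc hu le_rfl, coeff_of_lt_order n
    ((Nat.cast_lt.mpr n.lt_succ_self).trans_le htail), add_zero] at key
  exact key

theorem rescaleScalar_formalExp (c : 𝕂) (f : A⟦X⟧) :
    rescaleScalar c (formalExp 𝕂 f) = formalExp 𝕂 (rescaleScalar c f) :=
  rescaleScalar_scalarSubst c f _

theorem rescaleScalar_neg_one_formalLog {u : A⟦X⟧} (hu : constantCoeff u = 1)
    (hinv : rescaleScalar (-1 : 𝕂) u * u = 1) :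
    rescaleScalar (-1 : 𝕂) (formalLog 𝕂 u) = -formalLog 𝕂 u := by
  set g := formalLog 𝕂 u
  have hg : constantCoeff g = 0 := constantCoeff_formalLog u
  have hexp : formalExp 𝕂 g = u := formalExp_formalLog hu
  have hneg : rescaleScalar (-1 : 𝕂) u = formalExp 𝕂 (-g) := by
    calc rescaleScalar (-1 : 𝕂) u
        = rescaleScalar (-1 : 𝕂) u * (formalExp 𝕂 g * formalExp 𝕂 (-g)) := by
          rw [formalExp_mul_formalExp_neg hg, mul_one]
      _ = formalExp 𝕂 (-g) := by rw [hexp, ← mul_assoc, hinv, one_mul]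
  refine formalExp_injective (𝕂 := 𝕂) ?_ (by rw [map_neg, hg, neg_zero]) ?_
  · rw [← coeff_zero_eq_constantCoeff_apply, coeff_rescaleScalar, pow_zero, one_smul,
      coeff_zero_eq_constantCoeff, hg]
  · rw [← rescaleScalar_formalExp, hexp, hneg]

theorem coeff_pow_eq_zero_of_odd {g : A⟦X⟧} (hg : rescaleScalar (-1 : 𝕂) g = -g) {n ℓ : ℕ}
    (h : ¬Even (n + ℓ)) : coeff n (g ^ ℓ) = 0 := by
  have key := congrArg (coeff n) (map_pow (rescaleScalar (-1 : 𝕂)) g ℓ)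
  rw [coeff_rescaleScalar, hg, ← neg_one_smul 𝕂 g, _root_.smul_pow, coeff_smul] at key
  have hc : coeff n (g ^ ℓ) = -coeff n (g ^ ℓ) := by
    rcases Nat.even_or_odd n with hn | hn
    · have hℓ : Odd ℓ := by
        simp only [Nat.even_iff, Nat.odd_iff] at h hn ⊢; omega
      simpa [hn.neg_one_pow, hℓ.neg_one_pow] using key
    · have hℓ : Even ℓ := by
        simp only [Nat.even_iff, Nat.odd_iff] at h hn ⊢; omega
      simpa [hn.neg_one_pow, hℓ.neg_one_pow] using key.symm
  have h2 : (2 : 𝕂) • coeff n (g ^ ℓ) = 0 := by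
    rw [two_smul]; nth_rewrite 1 [hc]; exact neg_add_cancel _
  exact (smul_eq_zero.mp h2).resolve_left two_ne_zero

theorem formalExp_monomial_one (a : A) : formalExp 𝕂 (monomial 1 a) = expMulX 𝕂 a := by
  ext n
  rw [coeff_formalExp, coeff_expMulX, sum_eq_single_of_mem n (self_mem_range_succ n)]
  · rw [monomial_one_pow, coeff_monomial_same]
  · intro ℓ _ hℓ
    rw [monomial_one_pow, coeff_monomial, if_neg (Ne.symm hℓ), smul_zero]

theorem expMulX_neg_mul_expMulX (a : A) : expMulX 𝕂 (-a) * expMulX 𝕂 a = 1 := by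
  rw [← formalExp_monomial_one, ← formalExp_monomial_one, map_neg,
    formalExp_neg_mul_formalExp (constantCoeff_monomial_succ 0 a)]

end FormalExp

section SymmTrotter

variable {N : ℕ}

variable (𝕂) in
noncomputable def symmTrotterSeries (c : Fin N → A) : A⟦X⟧ :=
  (List.ofFn fun l => expMulX 𝕂 (c l)).prod * (List.ofFn fun l => expMulX 𝕂 (c l)).reverse.prod

theorem constantCoeff_of_mem_ofFn_expMulX {c : Fin N → A} {f : A⟦X⟧}
    (hf : f ∈ List.ofFn fun l => expMulX 𝕂 (c l)) : constantCoeff f = 1 := by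
  obtain ⟨l, rfl⟩ := List.mem_ofFn.mp hf
  exact constantCoeff_expMulX _

theorem constantCoeff_symmTrotterSeries (c : Fin N → A) :
    constantCoeff (symmTrotterSeries 𝕂 c) = 1 := by
  rw [symmTrotterSeries, map_mul,
    constantCoeff_list_prod_eq_one fun _ => constantCoeff_of_mem_ofFn_expMulX,
    constantCoeff_list_prod_eq_one fun _ hf =>
      constantCoeff_of_mem_ofFn_expMulX (List.mem_reverse.mp hf), one_mul]

theorem coeff_one_symmTrotterSeries (c : Fin N → A) :
    coeff 1 (symmTrotterSeries 𝕂 c) = 2 • ∑ l, c l := by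
  have hP := fun f => constantCoeff_of_mem_ofFn_expMulX (𝕂 := 𝕂) (c := c) (f := f)
  have hQ : ∀ f ∈ (List.ofFn fun l => expMulX 𝕂 (c l)).reverse, constantCoeff f = 1 :=
    fun f hf => hP f (List.mem_reverse.mp hf)
  rw [symmTrotterSeries, coeff_one_mul_of_constantCoeff (constantCoeff_list_prod_eq_one hP)
    (constantCoeff_list_prod_eq_one hQ), coeff_one_list_prod hP, coeff_one_list_prod hQ,
    List.map_reverse, List.sum_reverse, List.map_ofFn, List.sum_ofFn, two_nsmul]
  simp

theorem rescaleScalar_neg_one_symmTrotterSeries_mul [CharZero 𝕂] (c : Fin N → A) :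
    rescaleScalar (-1 : 𝕂) (symmTrotterSeries 𝕂 c) * symmTrotterSeries 𝕂 c = 1 := by
  have hinv : ∀ l, expMulX 𝕂 (-c l) * expMulX 𝕂 (c l) = 1 := fun l =>
    expMulX_neg_mul_expMulX (c l)
  simp only [symmTrotterSeries, map_mul, map_list_prod, List.map_reverse, List.map_ofFn,
    Function.comp_def, rescaleScalar_expMulX, neg_one_smul]
  rw [mul_assoc, ← mul_assoc (List.ofFn _).reverse.prod, List.prod_reverse_ofFn_mul_prod_ofFn hinv,
    one_mul, List.prod_ofFn_mul_prod_reverse_ofFn hinv]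

end SymmTrotter

section Extrapolation

variable [CharZero 𝕂]

theorem coeff_formalExp_pow {g : A⟦X⟧} (hg : constantCoeff g = 0) (k n : ℕ) :
    coeff n (formalExp 𝕂 g ^ k) =
      ∑ ℓ ∈ range (n + 1), ((k : 𝕂) ^ ℓ * (ℓ ! : 𝕂)⁻¹) • coeff n (g ^ ℓ) := by
  rw [formalExp_pow hg, coeff_formalExp]
  refine sum_congr rfl fun ℓ _ => ?_
  rw [_root_.smul_pow, coeff_smul, smul_smul, mul_comm]

theorem sum_weights_smul_coeff_pow_eq_ite {g : A⟦X⟧} (hg : constantCoeff g = 0)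
    (hodd : rescaleScalar (-1 : 𝕂) g = -g) {m : ℕ} (hm : 0 < m) {k : Fin m → ℕ}
    (hk : ∀ j, k j ≠ 0) {a : Fin m → 𝕂} (ha : IsExtrapolationWeights k a) {n ℓ : ℕ}
    (hn : n ≤ 2 * m) (hℓ : ℓ ≤ n) :
    (∑ j, a j * ((k j : 𝕂)⁻¹ ^ n * (k j : 𝕂) ^ ℓ)) • ((ℓ ! : 𝕂)⁻¹ • coeff n (g ^ ℓ)) =
      if ℓ = n then (n ! : 𝕂)⁻¹ • coeff 1 g ^ n else 0 := by
  have hk' : ∀ j, (k j : 𝕂) ≠ 0 := fun j => Nat.cast_ne_zero.mpr (hk j)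
  split_ifs with hℓn
  · subst hℓn
    simp only [inv_pow, inv_mul_cancel₀ (pow_ne_zero _ (hk' _)), mul_one, ha.sum_eq_one hm,
      one_smul, coeff_pow_self hg]
  by_cases hpar : Even (n + ℓ)
  · rcases Nat.eq_zero_or_pos ℓ with rfl | hℓ0
    · rw [pow_zero, coeff_one, if_neg (Ne.symm hℓn), smul_zero, smul_zero]
    obtain ⟨q, hq⟩ : ∃ q, n = ℓ + 2 * q := ⟨(n - ℓ) / 2, by obtain ⟨r, hr⟩ := hpar; omega⟩
    have hq0 := ha q (by omega)
    rw [if_neg (by omega)] at hq0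
    have hweights : ∑ j, a j * ((k j : 𝕂)⁻¹ ^ n * (k j : 𝕂) ^ ℓ) = 0 := by
      rw [← hq0]
      refine sum_congr rfl fun j _ => ?_
      rw [hq, inv_pow, pow_add, mul_inv, mul_right_comm,
        inv_mul_cancel₀ (pow_ne_zero _ (hk' j)), one_mul]
    rw [hweights, zero_smul]
  · rw [coeff_pow_eq_zero_of_odd hodd hpar, smul_zero, smul_zero]

/-- If `log u` is odd, the `X ^ n`-coefficient of `u(X/k)^k` is a polynomial in `k⁻²` whose
constant term is the coefficient of `exp (u₁ X)`; the weights annihilate the other terms. -/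
theorem coeff_sum_smul_rescaleScalar_pow {u : A⟦X⟧} (hu : constantCoeff u = 1)
    (hinv : rescaleScalar (-1 : 𝕂) u * u = 1) {m : ℕ} (hm : 0 < m) {k : Fin m → ℕ}
    (hk : ∀ j, k j ≠ 0) {a : Fin m → 𝕂} (ha : IsExtrapolationWeights k a) {n : ℕ}
    (hn : n ≤ 2 * m) :
    coeff n (∑ j, a j • rescaleScalar ((k j : 𝕂)⁻¹) (u ^ k j)) =
      coeff n (expMulX 𝕂 (coeff 1 u)) := by
  set g := formalLog 𝕂 u
  have hg : constantCoeff g = 0 := constantCoeff_formalLog u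
  have hexp : formalExp 𝕂 g = u := formalExp_formalLog hu
  have hterm := fun ℓ (hℓ : ℓ ∈ range (n + 1)) => sum_weights_smul_coeff_pow_eq_ite hg
    (rescaleScalar_neg_one_formalLog hu hinv) hm hk ha hn (Nat.lt_succ_iff.mp (mem_range.mp hℓ))
  calc coeff n (∑ j, a j • rescaleScalar ((k j : 𝕂)⁻¹) (u ^ k j))
      = ∑ ℓ ∈ range (n + 1),
          (∑ j, a j * ((k j : 𝕂)⁻¹ ^ n * (k j : 𝕂) ^ ℓ)) • ((ℓ ! : 𝕂)⁻¹ • coeff n (g ^ ℓ)) := by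
        rw [map_sum]
        simp_rw [coeff_smul, coeff_rescaleScalar, ← hexp, coeff_formalExp_pow hg, smul_sum,
          sum_smul]
        rw [sum_comm]
        refine sum_congr rfl fun ℓ _ => sum_congr rfl fun j _ => ?_
        rw [smul_smul, smul_smul, smul_smul]
        congr 1
        ring
    _ = coeff n (expMulX 𝕂 (coeff 1 u)) := by
        rw [sum_congr rfl hterm, sum_ite_eq', if_pos (self_mem_range_succ n), coeff_expMulX,
          ← hexp, coeff_one_formalExp]

end Extrapolation

end Algebra

variable {B : Type*} [NormedRing B] [NormedAlgebra ℂ B]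

structure HasExpTypeSum (f : B⟦X⟧) (F : ℝ → B) (M C : ℝ) : Prop where
  norm_coeff_le : ∀ n, ‖coeff n f‖ ≤ M * (C ^ n / n !)
  hasSum : ∀ s : ℝ, HasSum (fun n => (s : ℂ) ^ n • coeff n f) (F s)

namespace HasExpTypeSum

variable {f g : B⟦X⟧} {F G : ℝ → B} {M M' C C' : ℝ}

theorem norm_smul_coeff_le (hf : HasExpTypeSum f F M C) (s : ℝ) (n : ℕ) :
    ‖(s : ℂ) ^ n • coeff n f‖ ≤ M * ((|s| * C) ^ n / n !) := by
  rw [norm_smul, norm_pow, Complex.norm_real, Real.norm_eq_abs, mul_pow]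
  calc |s| ^ n * ‖coeff n f‖ ≤ |s| ^ n * (M * (C ^ n / n !)) := by
        gcongr; exact hf.norm_coeff_le n
    _ = M * (|s| ^ n * C ^ n / n !) := by ring

theorem summable_norm (hf : HasExpTypeSum f F M C) (s : ℝ) :
    Summable fun n => ‖(s : ℂ) ^ n • coeff n f‖ :=
  .of_nonneg_of_le (fun _ => norm_nonneg _) (hf.norm_smul_coeff_le s)
    ((Real.summable_pow_div_factorial _).mul_left M)

theorem one [NormOneClass B] : HasExpTypeSum (1 : B⟦X⟧) (fun _ => 1) 1 0 where
  norm_coeff_le n := by rcases n with _ | n <;> simp [coeff_one]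
  hasSum s := by
    convert hasSum_ite_eq 0 (1 : B) using 1
    ext n
    rcases n with _ | n <;> simp [coeff_one]

theorem mul [CompleteSpace B] (hf : HasExpTypeSum f F M C) (hg : HasExpTypeSum g G M' C') :
    HasExpTypeSum (f * g) (fun s => F s * G s) (M * M') (C + C') where
  norm_coeff_le n := by
    rw [coeff_mul, ← sum_antidiagonal_pow_div_factorial_mul, Finset.mul_sum]
    refine (norm_sum_le _ _).trans (Finset.sum_le_sum fun ij _ => ?_)
    calc ‖coeff ij.1 f * coeff ij.2 g‖ ≤ ‖coeff ij.1 f‖ * ‖coeff ij.2 g‖ := norm_mul_le _ _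
      _ ≤ M * (C ^ ij.1 / ij.1 !) * (M' * (C' ^ ij.2 / ij.2 !)) :=
        mul_le_mul (hf.norm_coeff_le _) (hg.norm_coeff_le _) (norm_nonneg _)
          ((norm_nonneg _).trans (hf.norm_coeff_le _))
      _ = M * M' * (C ^ ij.1 / ij.1 ! * (C' ^ ij.2 / ij.2 !)) := by ring
  hasSum s := by
    have key := hasSum_sum_range_mul_of_summable_norm (hf.summable_norm s) (hg.summable_norm s)
    rw [(hf.hasSum s).tsum_eq, (hg.hasSum s).tsum_eq] at key
    convert key using 2 with n
    rw [coeff_mul, Finset.smul_sum, Finset.Nat.sum_antidiagonal_eq_sum_range_succ_mk]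
    refine Finset.sum_congr rfl fun i hi => ?_
    rw [smul_mul_smul_comm, ← pow_add, Nat.add_sub_cancel' (Finset.mem_range_succ_iff.mp hi)]

theorem pow [NormOneClass B] [CompleteSpace B] (hf : HasExpTypeSum f F 1 C) (k : ℕ) :
    HasExpTypeSum (f ^ k) (fun s => F s ^ k) 1 (k * C) := by
  induction k with
  | zero => simpa using one
  | succ k ih => simpa [pow_succ, add_mul] using ih.mul hf

theorem list_prod [NormOneClass B] [CompleteSpace B] {ι : Type*} {f : ι → B⟦X⟧}
    {F : ι → ℝ → B} {C : ι → ℝ} (l : List ι) (h : ∀ i ∈ l, HasExpTypeSum (f i) (F i) 1 (C i)) :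
    HasExpTypeSum (l.map f).prod (fun s => (l.map fun i => F i s).prod) 1 (l.map C).sum := by
  induction l with
  | nil => simpa using one
  | cons i l ih =>
    simpa using (h i List.mem_cons_self).mul (ih fun j hj => h j (List.mem_cons_of_mem i hj))

theorem smul (hf : HasExpTypeSum f F M C) (a : ℂ) :
    HasExpTypeSum (a • f) (fun s => a • F s) (‖a‖ * M) C where
  norm_coeff_le n := by
    rw [coeff_smul, norm_smul, mul_assoc]
    exact mul_le_mul_of_nonneg_left (hf.norm_coeff_le n) (norm_nonneg a)
  hasSum s := by
    simpa [coeff_smul, smul_comm _ a] using (hf.hasSum s).const_smul a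

theorem sub (hf : HasExpTypeSum f F M C) (hg : HasExpTypeSum g G M' C) :
    HasExpTypeSum (f - g) (fun s => F s - G s) (M + M') C where
  norm_coeff_le n := by
    rw [map_sub, add_mul]
    exact (norm_sub_le _ _).trans (add_le_add (hf.norm_coeff_le n) (hg.norm_coeff_le n))
  hasSum s := by simpa [smul_sub] using (hf.hasSum s).sub (hg.hasSum s)

theorem sum {ι : Type*} (t : Finset ι) {f : ι → B⟦X⟧} {F : ι → ℝ → B} {M : ι → ℝ}
    (h : ∀ i ∈ t, HasExpTypeSum (f i) (F i) (M i) C) :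
    HasExpTypeSum (∑ i ∈ t, f i) (fun s => ∑ i ∈ t, F i s) (∑ i ∈ t, M i) C where
  norm_coeff_le n := by
    rw [map_sum, Finset.sum_mul]
    exact (norm_sum_le _ _).trans (Finset.sum_le_sum fun i hi => (h i hi).norm_coeff_le n)
  hasSum s := by
    simpa [Finset.smul_sum] using hasSum_sum fun i hi => (h i hi).hasSum s

theorem mono (hf : HasExpTypeSum f F M C) (hC : 0 ≤ C) (hCC' : C ≤ C') :
    HasExpTypeSum f F M C' where
  norm_coeff_le n := by
    have hM : 0 ≤ M := by simpa using (norm_nonneg _).trans (hf.norm_coeff_le 0)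
    refine (hf.norm_coeff_le n).trans (mul_le_mul_of_nonneg_left ?_ hM)
    gcongr
  hasSum := hf.hasSum

theorem rescaleScalar (hf : HasExpTypeSum f F M C) (c : ℝ) :
    HasExpTypeSum (rescaleScalar (c : ℂ) f) (fun s => F (c * s)) M (|c| * C) where
  norm_coeff_le n := by
    simpa [abs_mul] using hf.norm_smul_coeff_le c n
  hasSum s := by
    simpa [smul_smul, mul_pow, mul_comm] using hf.hasSum (c * s)

theorem expMulX [NormOneClass B] [CompleteSpace B] (a : B) :
    HasExpTypeSum (expMulX ℂ a) (fun s => NormedSpace.exp ((s : ℂ) • a)) 1 ‖a‖ where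
  norm_coeff_le n := by
    rw [coeff_expMulX, norm_smul, norm_inv, Complex.norm_natCast, one_mul, div_eq_inv_mul]
    exact mul_le_mul_of_nonneg_left (norm_pow_le a n) (by positivity)
  hasSum s := by
    convert NormedSpace.exp_series_hasSum_exp' (𝕂 := ℂ) ((s : ℂ) • a) using 1
    ext n
    rw [coeff_expMulX, _root_.smul_pow, smul_comm]

theorem norm_le_of_coeff_eq_zero (hf : HasExpTypeSum f F M C) (hC : 0 ≤ C) {K : ℕ}
    (hK : ∀ n < K, coeff n f = 0) {s : ℝ} (hs : 0 ≤ s) :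
    ‖F s‖ ≤ M * ((s * C) ^ K / K !) * Real.exp (s * C) := by
  have hsum := hf.summable_norm s
  have hbound := hf.norm_smul_coeff_le s
  rw [abs_of_nonneg hs] at hbound
  have hM : 0 ≤ M := by simpa using (norm_nonneg _).trans (hf.norm_coeff_le 0)
  rw [← (hf.hasSum s).tsum_eq]
  calc ‖∑' n, (s : ℂ) ^ n • coeff n f‖ ≤ ∑' n, ‖(s : ℂ) ^ n • coeff n f‖ :=
        norm_tsum_le_tsum_norm hsum
    _ = ∑' i, ‖(s : ℂ) ^ (i + K) • coeff (i + K) f‖ := by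
        rw [← hsum.sum_add_tsum_nat_add K, Finset.sum_eq_zero fun n hn => by
          rw [hK n (Finset.mem_range.mp hn), smul_zero, norm_zero], zero_add]
    _ ≤ ∑' i, M * ((s * C) ^ (i + K) / (i + K)!) :=
        Summable.tsum_le_tsum (fun i => hbound (i + K)) ((summable_nat_add_iff K).mpr hsum)
          ((summable_nat_add_iff K).mpr ((Real.summable_pow_div_factorial _).mul_left M))
    _ ≤ M * ((s * C) ^ K / K !) * Real.exp (s * C) := by
        rw [tsum_mul_left, mul_assoc]
        exact mul_le_mul_of_nonneg_left
          (tsum_pow_add_div_factorial_le (mul_nonneg hs hC) K) hM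

end HasExpTypeSum

end PowerSeries

section Multiproduct

open PowerSeries

variable {B : Type*} [NormedRing B] [NormedAlgebra ℂ B] {N : ℕ}

noncomputable def symmTrotter (c : Fin N → B) (s : ℝ) : B :=
  (List.ofFn fun l => NormedSpace.exp ((s : ℂ) • c l)).prod *
    (List.ofFn fun l => NormedSpace.exp ((s : ℂ) • c l)).reverse.prod

variable [NormOneClass B] [CompleteSpace B]

theorem hasExpTypeSum_symmTrotterSeries (c : Fin N → B) :
    HasExpTypeSum (symmTrotterSeries ℂ c) (symmTrotter c) 1 (2 * ∑ l, ‖c l‖) := by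
  have h : ∀ l ∈ List.finRange N, HasExpTypeSum (expMulX ℂ (c l))
      (fun s => NormedSpace.exp ((s : ℂ) • c l)) 1 ‖c l‖ := fun l _ => .expMulX (c l)
  have hP := HasExpTypeSum.list_prod _ h
  have hQ := HasExpTypeSum.list_prod _ fun l hl => h l (List.mem_reverse.mp hl)
  simp only [List.map_reverse, List.sum_reverse] at hQ
  rw [symmTrotterSeries, List.ofFn_eq_map, two_mul, Fin.sum_univ_def]
  convert hP.mul hQ using 2 with s
  · simp [symmTrotter, List.ofFn_eq_map]
  · rw [one_mul]

theorem norm_sum_smul_symmTrotter_pow_sub_exp_le (c : Fin N → B) {m : ℕ} (hm : 0 < m)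
    {k : Fin m → ℕ} (hk : ∀ j, k j ≠ 0) {a : Fin m → ℂ} (ha : IsExtrapolationWeights k a)
    {δ : ℝ} (hδ : 0 ≤ δ) :
    ‖∑ j, a j • symmTrotter c (δ / k j) ^ k j - NormedSpace.exp ((δ : ℂ) • 2 • ∑ l, c l)‖ ≤
      (∑ j, ‖a j‖ + 1) * ((δ * (2 * ∑ l, ‖c l‖)) ^ (2 * m + 1) / (2 * m + 1)!) *
        Real.exp (δ * (2 * ∑ l, ‖c l‖)) := by
  set u := symmTrotterSeries ℂ c
  set Λ := 2 * ∑ l, ‖c l‖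
  have hΛ : 0 ≤ Λ := by positivity
  have hu := hasExpTypeSum_symmTrotterSeries c
  have hj : ∀ j ∈ Finset.univ, HasExpTypeSum (a j • rescaleScalar ((k j : ℂ)⁻¹) (u ^ k j))
      (fun s => a j • symmTrotter c (s / k j) ^ k j) ‖a j‖ Λ := fun j _ => by
    have hkj : (k j : ℝ) ≠ 0 := Nat.cast_ne_zero.mpr (hk j)
    have h := ((hu.pow (k j)).rescaleScalar (k j : ℝ)⁻¹).smul (a j)
    rw [abs_inv, Nat.abs_cast, ← mul_assoc, inv_mul_cancel₀ hkj, one_mul, mul_one] at h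
    simpa only [Complex.ofReal_inv, Complex.ofReal_natCast, inv_mul_eq_div] using h
  have hexp : ‖(2 • ∑ l, c l : B)‖ ≤ Λ :=
    norm_nsmul_le.trans (by simpa [Λ] using norm_sum_le _ _)
  have hW := (HasExpTypeSum.sum Finset.univ hj).sub ((HasExpTypeSum.expMulX _).mono
    (norm_nonneg _) hexp)
  have hK : ∀ n < 2 * m + 1, coeff n (∑ j, a j • rescaleScalar ((k j : ℂ)⁻¹) (u ^ k j) -
      expMulX ℂ (2 • ∑ l, c l)) = 0 := fun n hn => by
    rw [map_sub, sub_eq_zero, ← coeff_one_symmTrotterSeries (𝕂 := ℂ)]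
    exact coeff_sum_smul_rescaleScalar_pow (constantCoeff_symmTrotterSeries c)
      (rescaleScalar_neg_one_symmTrotterSeries_mul c) hm hk ha (by omega)
  simpa using hW.norm_le_of_coeff_eq_zero hΛ hK hδ

end Multiproduct

theorem norm_pow_sub_pow_le {B : Type*} [NormedRing B] [NormOneClass B] {M V : B} {η : ℝ}
    (hV : ‖V‖ ≤ 1) (hMV : ‖M - V‖ ≤ η) (n : ℕ) :
    ‖M ^ n - V ^ n‖ ≤ n * η * (1 + η) ^ n := by
  have hη : 0 ≤ η := (norm_nonneg _).trans hMV
  have hM : ‖M‖ ≤ 1 + η := calc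
    ‖M‖ = ‖V + (M - V)‖ := by rw [add_sub_cancel]
    _ ≤ 1 + η := (norm_add_le _ _).trans (add_le_add hV hMV)
  induction n with
  | zero => simp
  | succ n ih =>
    have hsplit : M ^ (n + 1) - V ^ (n + 1) = M ^ n * (M - V) + (M ^ n - V ^ n) * V := by
      rw [pow_succ, pow_succ]; noncomm_ring
    have hpow : (1 + η) ^ n ≤ (1 + η) ^ (n + 1) := pow_le_pow_right₀ (by linarith) n.le_succ
    calc ‖M ^ (n + 1) - V ^ (n + 1)‖
        ≤ ‖M‖ ^ n * ‖M - V‖ + ‖M ^ n - V ^ n‖ * ‖V‖ := by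
          rw [hsplit]
          refine (norm_add_le _ _).trans (add_le_add ?_ (norm_mul_le _ _))
          exact (norm_mul_le _ _).trans (mul_le_mul_of_nonneg_right (norm_pow_le _ _)
            (norm_nonneg _))
      _ ≤ (1 + η) ^ n * η + n * η * (1 + η) ^ n * 1 := by gcongr
      _ ≤ (n + 1 : ℕ) * η * (1 + η) ^ (n + 1) := by
          push_cast
          nlinarith [mul_le_mul_of_nonneg_left hpow (by positivity : (0 : ℝ) ≤ (n + 1) * η)]

theorem norm_pow_sub_pow_le_two_mul {B : Type*} [NormedRing B] [NormOneClass B] {M V : B}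
    {η : ℝ} (hV : ‖V‖ ≤ 1) (hMV : ‖M - V‖ ≤ η) {n : ℕ} (hn : n * η ≤ Real.log 2) :
    ‖M ^ n - V ^ n‖ ≤ 2 * (n * η) := by
  have hη : 0 ≤ η := (norm_nonneg _).trans hMV
  have hgrowth : (1 + η) ^ n ≤ 2 := calc
    (1 + η) ^ n ≤ Real.exp η ^ n := by gcongr; linarith [Real.add_one_le_exp η]
    _ = Real.exp (n * η) := (Real.exp_nat_mul η n).symm
    _ ≤ 2 := by simpa [Real.exp_log] using Real.exp_le_exp.mpr hn
  calc ‖M ^ n - V ^ n‖ ≤ n * η * (1 + η) ^ n := norm_pow_sub_pow_le hV hMV n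
    _ ≤ 2 * (n * η) := by nlinarith [mul_nonneg (Nat.cast_nonneg n) hη]

/-- With `x = tλ/r ≤ log 2` (second term of the max) we have `eˣ ≤ 2` and `S + 1 ≤ 2S`, so the
left side is at most `4 S tλ x^{2m} / (2m+1)!`, while the first term of the max says exactly
that `8 S tλ x^{2m} ≤ ε (2m+1)!`. -/
theorem multiproduct_steps_mul_error_le {t lam S ε : ℝ} {m r : ℕ} (ht : 0 < t) (hlam : 0 < lam)
    (hS : 1 ≤ S) (hε : 0 < ε) (hm : 0 < m) (hr : 0 < r)
    (hrb : (r : ℝ) ≥ t * lam * max ((8 * t * lam * S / (ε * (2 * m + 1)!)) ^ ((1 : ℝ) / (2 * m)))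
      (1 / Real.log 2)) :
    r * ((S + 1) * ((t / r * lam) ^ (2 * m + 1) / (2 * m + 1)!) * Real.exp (t / r * lam)) ≤
      ε / 2 := by
  rw [mul_assoc 8 t lam] at hrb
  have hr' : (0 : ℝ) < r := Nat.cast_pos.mpr hr
  have hτ : 0 < t * lam := mul_pos ht hlam
  set x := t / r * lam with hx
  have hrx : r * x = t * lam := by rw [hx]; field_simp
  have hlog : x ≤ Real.log 2 := by
    have h := (mul_le_mul_of_nonneg_left (le_max_right _ _) hτ.le).trans hrb
    rw [mul_one_div, div_le_iff₀ (Real.log_pos one_lt_two)] at h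
    rw [← mul_le_mul_iff_right₀ hr', hrx]
    linarith
  have hexp : Real.exp x ≤ 2 := by
    simpa [Real.exp_log] using Real.exp_le_exp.mpr hlog
  have hmain : 8 * (t * lam) * S * x ^ (2 * m) ≤ ε * (2 * m + 1)! := by
    have h := (mul_le_mul_of_nonneg_left (le_max_left _ _) hτ.le).trans hrb
    rw [← le_div_iff₀' hτ, one_div, Real.rpow_inv_le_iff_of_pos (by positivity) (by positivity)
      (by positivity), div_le_iff₀ (by positivity)] at h
    have hxr : (r / (t * lam) : ℝ) ^ ((2 * m : ℕ) : ℝ) * x ^ (2 * m) = 1 := by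
      rw [Real.rpow_natCast, ← mul_pow, hx]; field_simp; simp
    push_cast at hxr
    calc 8 * (t * lam) * S * x ^ (2 * m)
        ≤ (r / (t * lam)) ^ (2 * (m : ℝ)) * (ε * (2 * m + 1)!) * x ^ (2 * m) :=
          mul_le_mul_of_nonneg_right h (by positivity)
      _ = ε * (2 * m + 1)! := by rw [mul_right_comm, hxr, one_mul]
  calc r * ((S + 1) * (x ^ (2 * m + 1) / (2 * m + 1)!) * Real.exp x)
      ≤ r * (2 * S * (x ^ (2 * m + 1) / (2 * m + 1)!) * 2) := by gcongr; linarith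
    _ = 4 * S * (r * x) * x ^ (2 * m) / (2 * m + 1)! := by ring
    _ ≤ ε / 2 := by
        rw [hrx, div_le_iff₀ (by positivity)]
        linarith

theorem Matrix.IsHermitian.norm_exp_neg_mul_I_smul_le_one {n : Type*} [Fintype n]
    [DecidableEq n] {H : Matrix n n ℂ} (hH : H.IsHermitian) (s : ℝ) :
    ‖NormedSpace.exp ((-(s : ℂ) * Complex.I) • H)‖ ≤ 1 := by
  set A := (-(s : ℂ) * Complex.I) • H
  rcases isEmpty_or_nonempty n with hn | hn
  · simp [Subsingleton.elim (NormedSpace.exp A) 0]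
  have hA : A.conjTranspose = -A := by
    simp [A, Matrix.conjTranspose_smul, hH.eq]
  have hU : NormedSpace.exp A ∈ unitary (Matrix n n ℂ) := by
    rw [Unitary.mem_iff, Matrix.star_eq_conjTranspose, ← Matrix.exp_conjTranspose, hA,
      ← Matrix.exp_add_of_commute _ _ (Commute.neg_left (Commute.refl A)),
      ← Matrix.exp_add_of_commute _ _ (Commute.neg_right (Commute.refl A)), neg_add_cancel,
      add_neg_cancel, NormedSpace.exp_zero, and_self]
  exact (CStarRing.norm_of_mem_unitary hU).le

theorem Matrix.exp_div_smul_pow {n : Type*} [Fintype n] [DecidableEq n] (z : ℂ)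
    (A : Matrix n n ℂ) {r : ℕ} (hr : r ≠ 0) :
    NormedSpace.exp ((z / r) • A) ^ r = NormedSpace.exp (z • A) := by
  rw [← Matrix.exp_nsmul, ← Nat.cast_smul_eq_nsmul ℂ, smul_smul,
    mul_div_cancel₀ _ (Nat.cast_ne_zero.mpr hr)]

section Hamiltonian

variable {d N : ℕ}

theorem U2_eq_symmTrotter (h : Fin N → Matrix (Fin d) (Fin d) ℂ) (δ : ℝ) :
    U2 h δ = symmTrotter (fun l => (-(1 / 2 : ℂ) * Complex.I) • h l) δ := by
  have hz : (((-(δ / 2) : ℝ) : ℂ) * Complex.I) = (δ : ℂ) * (-(1 / 2) * Complex.I) := by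
    push_cast; ring
  simp only [U2, symmTrotter, smul_smul, hz]

theorem norm_sum_smul_U2_pow_sub_exp_le [Nonempty (Fin d)]
    (h : Fin N → Matrix (Fin d) (Fin d) ℂ) {m : ℕ} (hm : 0 < m) {k : Fin m → ℕ}
    (hk : ∀ j, k j ≠ 0) {a : Fin m → ℝ} (ha : IsExtrapolationWeights k a) {δ : ℝ}
    (hδ : 0 ≤ δ) :
    ‖∑ j, (a j : ℂ) • U2 h (δ / k j) ^ k j -
        NormedSpace.exp ((-(δ : ℂ) * Complex.I) • ∑ l, h l)‖ ≤
      (∑ j, |a j| + 1) * ((δ * ∑ l, ‖h l‖) ^ (2 * m + 1) / (2 * m + 1)!) *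
        Real.exp (δ * ∑ l, ‖h l‖) := by
  set c : Fin N → Matrix (Fin d) (Fin d) ℂ := fun l => (-(1 / 2 : ℂ) * Complex.I) • h l
  have hc : (δ : ℂ) • 2 • ∑ l, c l = (-(δ : ℂ) * Complex.I) • ∑ l, h l := by
    rw [Finset.smul_sum, Finset.smul_sum, Finset.smul_sum]
    refine Finset.sum_congr rfl fun l _ => ?_
    rw [two_nsmul, ← add_smul, smul_smul]
    congr 1
    ring
  have hΛ : 2 * ∑ l, ‖c l‖ = ∑ l, ‖h l‖ := by simp [c, norm_smul, Finset.mul_sum]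
  have key := norm_sum_smul_symmTrotter_pow_sub_exp_le c hm hk (ha.map Complex.ofRealHom) hδ
  rw [hΛ, hc] at key
  simp only [U2_eq_symmTrotter]
  simpa only [Function.comp_apply, Complex.ofRealHom_eq_coe, Complex.norm_real,
    Real.norm_eq_abs] using key

end Hamiltonian

theorem multiproduct_simulation_error_bound_general {d N : ℕ}
    (h : Fin N → Matrix (Fin d) (Fin d) ℂ)
    (hherm : ∀ l, (h l).IsHermitian)
    (H : Matrix (Fin d) (Fin d) ℂ) (hH : H = ∑ l, h l)
    (lam : ℝ) (hlam : lam = ∑ l, ‖h l‖) (hlampos : 0 < lam)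
    (t : ℝ) (ht : 0 < t) (ε : ℝ) (hε : 0 < ε) (hε1 : ε ≤ 1)
    {m : ℕ} (hm : 1 ≤ m)
    (k : Fin m → ℕ) (hkpos : ∀ j, 0 < k j)
    (a : Fin m → ℝ)
    (hV : ∀ i : Fin m,
      ∑ j, a j * ((k j : ℝ) ^ (2 * (i : ℕ)))⁻¹ = if (i : ℕ) = 0 then 1 else 0)
    (r : ℕ) (hr : 0 < r)
    (hrbound : (r : ℝ) ≥ t * lam *
      max ((8 * t * lam * (∑ j, |a j|) / (ε * (2 * m + 1).factorial)) ^
          ((1 : ℝ) / (2 * m)))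
        (1 / Real.log 2)) :
    ‖(∑ j, ((a j : ℂ) • (U2 h (t / (r * k j))) ^ (k j))) ^ r -
        NormedSpace.exp ((-(t : ℂ) * Complex.I) • H)‖ ≤ ε := by
  rcases isEmpty_or_nonempty (Fin d) with hd | hd
  · -- the estimates below need `‖1‖ = 1`, which fails for `0 × 0` matrices
    simp [Subsingleton.elim (_ : Matrix (Fin d) (Fin d) ℂ) 0, hε.le]
  subst hH hlam
  have ha : IsExtrapolationWeights k a := fun q hq => hV ⟨q, hq⟩
  have hstep := norm_sum_smul_U2_pow_sub_exp_le h hm (fun j => (hkpos j).ne') ha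
    (div_nonneg ht.le r.cast_nonneg)
  have hunit := Matrix.IsHermitian.norm_exp_neg_mul_I_smul_le_one
    (isSelfAdjoint_sum univ fun l _ => hherm l) (t / r)
  have hrη := multiproduct_steps_mul_error_le ht hlampos (ha.one_le_sum_abs hm) hε hm hr hrbound
  have hδ : -((t / r : ℝ) : ℂ) * Complex.I = -(t : ℂ) * Complex.I / r := by push_cast; ring
  rw [hδ] at hstep hunit
  rw [← Matrix.exp_div_smul_pow _ _ hr.ne']
  simp only [← div_div]
  exact (norm_pow_sub_pow_le_two_mul hunit hstep (by linarith [Real.log_two_gt_d9])).trans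
    (by linarith)

/-- Combining Eqs. (15)–(17): the choice
`r ≥ t λ * max ((8 t λ ‖a‖₁ / (ε (2 m + 1)!)) ^ (1 / (2 m))) (1 / log 2)`
of the number of steps guarantees total multiproduct simulation error at most `ε`. -/
theorem multiproduct_simulation_error_bound {d N : ℕ}
    (h : Fin N → Matrix (Fin d) (Fin d) ℂ)
    (hherm : ∀ l, (h l).IsHermitian)
    (H : Matrix (Fin d) (Fin d) ℂ) (hH : H = ∑ l, h l)
    (lam : ℝ) (hlam : lam = ∑ l, ‖h l‖) (hlampos : 0 < lam)
    (t : ℝ) (ht : 0 < t) (ε : ℝ) (hε : 0 < ε) (hε1 : ε ≤ 1)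
    {m : ℕ} (hm : 1 ≤ m)
    (k : Fin m → ℕ) (hkpos : ∀ j, 0 < k j) (hkinj : Function.Injective k)
    (a : Fin m → ℝ)
    (hV : ∀ i : Fin m,
      ∑ j, a j * ((k j : ℝ) ^ (2 * (i : ℕ)))⁻¹ = if (i : ℕ) = 0 then 1 else 0)
    (r : ℕ) (hr : 0 < r)
    (hrbound : (r : ℝ) ≥ t * lam *
      max ((8 * t * lam * (∑ j, |a j|) / (ε * (2 * m + 1).factorial)) ^
          ((1 : ℝ) / (2 * m)))
        (1 / Real.log 2)) :
    ‖(∑ j, ((a j : ℂ) • (U2 h (t / (r * k j))) ^ (k j))) ^ r -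
        NormedSpace.exp ((-(t : ℂ) * Complex.I) • H)‖ ≤ ε :=
  multiproduct_simulation_error_bound_general h hherm H hH lam hlam hlampos t ht ε hε hε1 hm k hkpos
    a hV r hr hrbound
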